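/- For every integer k ≥ 2 and every sufficiently large n, every edge-coloring of K^{(k)}_{n,…,n} using at most ⌊n/2⌋ colors contains a copy of K_{1,…,1,2,2} with no odd color class; consequently r_odd(K^{(k)}_{n,…,n}, K_{1,…,1,2,2}) > n/2. -/

import Mathlib

open Finset

/-- An edge of the complete `k`-partite `k`-uniform hypergraph `K^{(k)}_{n,…,n}` is a
transversal, i.e. a choice of one vertex from each of the `k` parts; we encode it as a
function `Fin k → Fin n`. A copy of `K_{1,…,1,2,2}` is determined by two distinct special
parts `p ≠ q`, a base transversal `f`, and second choices `a ≠ f p`, `b ≠ f q` in parts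
`p` and `q`; its edge set consists of the four resulting transversals. -/
def isCopy1122 (n k : ℕ) (E : Finset (Fin k → Fin n)) : Prop :=
  ∃ p q : Fin k, p ≠ q ∧ ∃ (f : Fin k → Fin n) (a b : Fin n), f p ≠ a ∧ f q ≠ b ∧
    E = {f, Function.update f p a, Function.update f q b,
         Function.update (Function.update f p a) q b}

/-- Under an edge-coloring `c`, the copy with edge set `E` has an odd color class. -/
def hasOddColorClass {α : Type*} [DecidableEq α] {N : ℕ} (c : α → Fin N)
    (E : Finset α) : Prop :=
  ∃ i : Fin N, Odd (E.filter fun e => c e = i).card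

/-- The odd Ramsey number `r_odd(K^{(k)}_{n,…,n}, K_{1,…,1,2,2})`. -/
noncomputable def oddRamseyHyp (n k : ℕ) : ℕ :=
  sInf {N : ℕ | ∃ c : (Fin k → Fin n) → Fin N,
    ∀ E : Finset (Fin k → Fin n), isCopy1122 n k E → hasOddColorClass c E}

/-!
Fix two parts and restrict the coloring to the `n × n` grid of transversals that vary only
there. With at most `n / 2` colors, Cauchy–Schwarz gives every column at least `n` ordered pairs
of distinct rows of equal color, hence at least `n²` (column, row pair) incidences against only
`n² - n` row pairs. So some pair of rows agrees on two columns, and those four cells form a copy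
of `K_{1,…,1,2,2}` whose color classes come in pairs. The bound on `r_odd` follows because an
injective coloring shows that the set defining it is nonempty.
-/

open Function

section Coloring

variable {α β κ : Type*} [Fintype α] [Fintype β] [Fintype κ]

lemma card_sq_le_card_mul_card_filter_eq [DecidableEq κ] (g : α → κ) :
    Fintype.card α ^ 2 ≤ Fintype.card κ * #{p : α × α | g p.1 = g p.2} := by
  have hfibers : #{p : α × α | g p.1 = g p.2} = ∑ i, #{x | g x = i} ^ 2 := by
    rw [card_eq_sum_card_fiberwise (f := fun p => g p.1) (t := univ) fun _ _ => mem_univ _]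
    refine sum_congr rfl fun i _ => ?_
    rw [sq, ← card_product]
    congr 1
    ext ⟨x, y⟩
    simp only [mem_filter, mem_univ, true_and, mem_product]
    grind
  have hsum : ∑ i, #{x | g x = i} = Fintype.card α :=
    (card_eq_sum_card_fiberwise fun x _ => mem_univ (g x)).symm
  calc Fintype.card α ^ 2 = (∑ i, #{x | g x = i}) ^ 2 := by rw [hsum]
    _ ≤ Fintype.card κ * ∑ i, #{x | g x = i} ^ 2 := sq_sum_le_card_mul_sum_sq
    _ = _ := by rw [hfibers]

lemma card_le_card_filter_offDiag [DecidableEq κ] (hκ : 2 * Fintype.card κ ≤ Fintype.card α) (g : α → κ) :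
    Fintype.card α ≤ #{p ∈ (univ : Finset α).offDiag | g p.1 = g p.2} := by
  classical
  rcases isEmpty_or_nonempty α with _ | ⟨⟨x⟩⟩
  · simp
  have hsplit : #{p : α × α | g p.1 = g p.2}
      = Fintype.card α + #{p ∈ (univ : Finset α).offDiag | g p.1 = g p.2} := by
    rw [← univ_product_univ, ← diag_union_offDiag, filter_union,
      card_union_of_disjoint (disjoint_filter_filter (disjoint_diag_offDiag _)),
      filter_true_of_mem fun p hp => by rw [(mem_diag.1 hp).2], diag_card, card_univ]
  have hcs := card_sq_le_card_mul_card_filter_eq g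
  have hκpos : 0 < Fintype.card κ := Fintype.card_pos_iff.2 ⟨g x⟩
  have : Fintype.card κ * (2 * Fintype.card α)
      ≤ Fintype.card κ * #{p : α × α | g p.1 = g p.2} :=
    calc Fintype.card κ * (2 * Fintype.card α) = 2 * Fintype.card κ * Fintype.card α := by ring
      _ ≤ Fintype.card α ^ 2 := by rw [sq]; exact Nat.mul_le_mul_right _ hκ
      _ ≤ _ := hcs
  have := Nat.le_of_mul_le_mul_left this hκpos
  omega

lemma exists_two_rows_agree_on_two_columns [Nonempty α]
    (hκ : 2 * Fintype.card κ ≤ Fintype.card α) (hαβ : Fintype.card α ≤ Fintype.card β)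
    (c : α → β → κ) : ∃ x a y b, x ≠ a ∧ y ≠ b ∧ c x y = c a y ∧ c x b = c a b := by
  classical
  set S := (univ : Finset β).sigma fun y =>
    {p ∈ (univ : Finset α).offDiag | c p.1 y = c p.2 y}
  have hlt : #(univ : Finset α).offDiag < #S := by
    have hpos := Fintype.card_pos (α := α)
    calc #(univ : Finset α).offDiag = Fintype.card α * Fintype.card α - Fintype.card α := by
          rw [offDiag_card, card_univ]
      _ < Fintype.card α * Fintype.card α := Nat.sub_lt (by positivity) hpos
      _ ≤ ∑ _y : β, Fintype.card α := by
          rw [sum_const, card_univ, smul_eq_mul]; exact Nat.mul_le_mul_right _ hαβ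
      _ ≤ #S := by
          rw [card_sigma]; exact sum_le_sum fun y _ => card_le_card_filter_offDiag hκ (c · y)
  obtain ⟨⟨y, x, a⟩, hy, ⟨b, x', a'⟩, hb, hne, hsnd⟩ :=
    exists_ne_map_eq_of_card_lt_of_maps_to hlt (f := Sigma.snd)
      fun s hs => (mem_filter.1 (mem_sigma.1 hs).2).1
  obtain ⟨rfl, rfl⟩ := Prod.ext_iff.1 hsnd
  simp only [S, mem_sigma, mem_filter, mem_offDiag, mem_univ, true_and] at hy hb
  exact ⟨x, a, y, b, hy.1, fun h => hne (by subst h; rfl), hy.2, hb.2⟩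

end Coloring

lemma not_hasOddColorClass_of_two_pairs {α : Type*} [DecidableEq α] {N : ℕ} (c : α → Fin N)
    {w x y z : α} (hwx : w ≠ x) (hyz : y ≠ z) (hdisj : Disjoint ({w, x} : Finset α) {y, z})
    (hcwx : c w = c x) (hcyz : c y = c z) : ¬ hasOddColorClass c {w, x, y, z} := by
  have hpair : ∀ u v, u ≠ v → c u = c v →
      ∀ i, Even #(({u, v} : Finset α).filter fun e => c e = i) := by
    intro u v huv hc i
    by_cases h : c u = i
    · rw [filter_true_of_mem (by simp [← hc, h]), card_pair huv]; exact even_two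
    · rw [filter_false_of_mem (by simp [← hc, h])]; exact ⟨0, rfl⟩
  rintro ⟨i, hodd⟩
  rw [show ({w, x, y, z} : Finset α) = {w, x} ∪ {y, z} by rw [insert_union, singleton_union],
    filter_union, card_union_of_disjoint (disjoint_filter_filter hdisj)] at hodd
  exact Nat.not_odd_iff_even.2 ((hpair w x hwx hcwx i).add (hpair y z hyz hcyz i)) hodd

lemma hasOddColorClass_of_injective {α : Type*} [DecidableEq α] {N : ℕ} {c : α → Fin N}
    (hc : Injective c) {E : Finset α} (hE : E.Nonempty) : hasOddColorClass c E := by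
  obtain ⟨f, hf⟩ := hE
  refine ⟨c f, ?_⟩
  rw [show E.filter (fun e => c e = c f) = {f} by ext; simp [hc.eq_iff]; grind, card_singleton]
  exact odd_one

section Hypergraph

variable {n k : ℕ}

lemma isCopy1122.nonempty {E : Finset (Fin k → Fin n)} (hE : isCopy1122 n k E) :
    E.Nonempty := by
  obtain ⟨-, -, -, f, -, -, -, -, rfl⟩ := hE
  exact insert_nonempty _ _

lemma isCopy1122_update {p q : Fin k} (hpq : p ≠ q) (f : Fin k → Fin n) {x a y b : Fin n}
    (hxa : x ≠ a) (hyb : y ≠ b) :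
    isCopy1122 n k {update (update f p x) q y, update (update f p a) q y,
      update (update f p x) q b, update (update f p a) q b} := by
  refine ⟨p, q, hpq, update (update f p x) q y, a, b, ?_, ?_, ?_⟩
  · rwa [update_of_ne hpq, update_self]
  · rwa [update_self]
  · have hp : update (update (update f p x) q y) p a = update (update f p a) q y := by
      rw [update_comm hpq.symm, update_idem]
    rw [hp, update_idem, update_idem]

lemma exists_isCopy1122_not_hasOddColorClass (hk : 2 ≤ k) (hn : 0 < n) {N : ℕ}
    (hN : 2 * N ≤ n) (c : (Fin k → Fin n) → Fin N) :
    ∃ E, isCopy1122 n k E ∧ ¬ hasOddColorClass c E := by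
  have : Nonempty (Fin n) := ⟨⟨0, hn⟩⟩
  let p : Fin k := ⟨0, by omega⟩
  let q : Fin k := ⟨1, hk⟩
  have hpq : p ≠ q := by simp [p, q, Fin.ext_iff]
  let e (u v : Fin n) : Fin k → Fin n := update (update (fun _ => ⟨0, hn⟩) p u) q v
  have he_p (u v) : e u v p = u := by simp [e, update_of_ne hpq]
  have he_q (u v) : e u v q = v := by simp [e]
  obtain ⟨x, a, y, b, hxa, hyb, hcy, hcb⟩ :=
    exists_two_rows_agree_on_two_columns (by simpa using hN) le_rfl fun u v => c (e u v)
  refine ⟨_, isCopy1122_update hpq _ hxa hyb, not_hasOddColorClass_of_two_pairs c ?_ ?_ ?_ hcy hcb⟩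
  · exact fun h => hxa ((he_p x y).symm.trans ((congrFun h p).trans (he_p a y)))
  · exact fun h => hxa ((he_p x b).symm.trans ((congrFun h p).trans (he_p a b)))
  · refine disjoint_left.2 fun g hg hg' => hyb ?_
    simp only [mem_insert, mem_singleton] at hg hg'
    have hgy : g q = y := by rcases hg with rfl | rfl <;> exact he_q _ _
    have hgb : g q = b := by rcases hg' with rfl | rfl <;> exact he_q _ _
    exact hgy.symm.trans hgb

lemma lt_oddRamseyHyp {m : ℕ}
    (h : ∀ N ≤ m, ∀ c : (Fin k → Fin n) → Fin N,
      ∃ E, isCopy1122 n k E ∧ ¬ hasOddColorClass c E) :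
    m < oddRamseyHyp n k := by
  obtain ⟨c, hc⟩ : oddRamseyHyp n k ∈ {N : ℕ | ∃ c : (Fin k → Fin n) → Fin N,
      ∀ E, isCopy1122 n k E → hasOddColorClass c E} := Nat.sInf_mem ⟨_, Fintype.equivFin _,
    fun E hE => hasOddColorClass_of_injective (Fintype.equivFin _).injective hE.nonempty⟩
  by_contra! hle
  obtain ⟨E, hE, hnot⟩ := h _ hle c
  exact hnot (hc E hE)

end Hypergraph

/-- For every `k ≥ 2` and every sufficiently large `n`, every edge-coloring of
`K^{(k)}_{n,…,n}` using at most `⌊n/2⌋` colors contains a copy of `K_{1,…,1,2,2}` with no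
odd color class; consequently `r_odd(K^{(k)}_{n,…,n}, K_{1,…,1,2,2}) > n/2`. -/
theorem stmt4 (k : ℕ) (hk : 2 ≤ k) :
    ∃ n₀ : ℕ, ∀ n : ℕ, n₀ ≤ n →
      (∀ N : ℕ, N ≤ n / 2 → ∀ c : (Fin k → Fin n) → Fin N,
        ∃ E : Finset (Fin k → Fin n), isCopy1122 n k E ∧ ¬ hasOddColorClass c E) ∧
      (n : ℝ) / 2 < (oddRamseyHyp n k : ℝ) := by
  refine ⟨1, fun n hn => ?_⟩
  have hcopy : ∀ N ≤ n / 2, ∀ c : (Fin k → Fin n) → Fin N,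
      ∃ E, isCopy1122 n k E ∧ ¬ hasOddColorClass c E :=
    fun N hN c => exists_isCopy1122_not_hasOddColorClass hk hn (by omega) c
  refine ⟨hcopy, ?_⟩
  have hlt : n < oddRamseyHyp n k * 2 :=
    (Nat.div_lt_iff_lt_mul two_pos).1 (lt_oddRamseyHyp hcopy)
  rw [div_lt_iff₀ two_pos]
  exact_mod_cast hlt
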